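/- arXiv:2501.05660 — 2 statements merged into one kernel-verified Lean document; each statement's English description precedes it below -/
import Mathlib

section
/- In the limit λ_{-r} → ∞ (holding λ_r, μ₀, μ fixed and p ∈ (0,1]), the red-task average AoI Δ_r(p, μ₀) converges to (λ_r p + μ₀)/(λ_r p μ₀), the average AoI of a single M/M/1 LCFS-preemptive server with arrival rate λ_r p and service rate μ₀. -/
open Filter Topology

/- Numerator and denominator of `Δ_r` are quadratics in `λ_{-r}`, so the limit is the ratio of
their leading coefficients, `μ₀ + λ_r p` and `λ_r p μ₀`. -/

theorem tendsto_quadratic_div_quadratic_atTop (a b c d e f : ℝ) (hd : d ≠ 0) :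
    Tendsto (fun x => (a * x ^ 2 + b * x + c) / (d * x ^ 2 + e * x + f)) atTop (𝓝 (a / d)) := by
  -- dividing through by `x ^ 2` gives a function of `x⁻¹` that is continuous at `0`
  have hcont : ContinuousAt (fun t => (a + b * t + c * t ^ 2) / (d + e * t + f * t ^ 2)) 0 :=
    ContinuousAt.div (by fun_prop) (by fun_prop) (by simpa using hd)
  have hlim := hcont.tendsto.comp tendsto_inv_atTop_zero
  simp only [mul_zero, add_zero, ne_eq, OfNat.ofNat_ne_zero, not_false_eq_true, zero_pow]
    at hlim
  refine hlim.congr' ?_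
  filter_upwards [eventually_ne_atTop 0] with x hx
  rw [Function.comp_apply, ← mul_div_mul_left _ _ (pow_ne_zero 2 hx)]
  congr 1 <;> field_simp

theorem red_aoi_saturation_limit_general (lam_r mu0 mu p : ℝ)
    (hlr : 0 < lam_r) (hmu0 : 0 < mu0)
    (hp : p ∈ Set.Ioc (0:ℝ) 1) :
    Tendsto (fun lam_mr : ℝ =>
      (mu0 * (lam_mr + mu) * (lam_mr + mu + mu0)
          + lam_r ^ 3 * p * (1 - p)
          + lam_r ^ 2 * (mu + mu0 + lam_mr * p * (2 - p))
          + lam_r * ((mu + mu0) ^ 2 + lam_mr ^ 2 * p + lam_mr * (mu * (1 + p) + 2 * mu0)))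
        / (lam_r * (mu + (lam_r + lam_mr) * p)
            * (mu0 * (lam_mr + mu + mu0) + lam_r * (mu + mu0) * (1 - p))))
      atTop (nhds ((lam_r * p + mu0) / (lam_r * p * mu0))) := by
  have hd : lam_r * p * mu0 ≠ 0 := by
    have := hp.1
    positivity
  set K := mu0 * (mu + mu0) + lam_r * (mu + mu0) * (1 - p)
  refine (tendsto_quadratic_div_quadratic_atTop (lam_r * p + mu0)
    (mu0 * (2 * mu + mu0) + lam_r ^ 2 * p * (2 - p) + lam_r * (mu * (1 + p) + 2 * mu0))
    (mu0 * mu * (mu + mu0) + lam_r ^ 3 * p * (1 - p) + lam_r ^ 2 * (mu + mu0)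
      + lam_r * (mu + mu0) ^ 2)
    (lam_r * p * mu0) (lam_r * (p * K + (mu + lam_r * p) * mu0)) (lam_r * (mu + lam_r * p) * K)
    hd).congr fun x => ?_
  congr 1 <;> ring

/-- As the exogenous red load `λ_{-r} → ∞`, the red-task average AoI converges to
`(λ_r p + μ₀)/(λ_r p μ₀)`, the AoI of a single M/M/1 LCFS-preemptive server
with arrival rate `λ_r p` and service rate `μ₀`. -/
theorem red_aoi_saturation_limit (lam_r mu0 mu p : ℝ)
    (hlr : 0 < lam_r) (hmu0 : 0 < mu0) (hmu : 0 < mu)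
    (hp : p ∈ Set.Ioc (0:ℝ) 1) :
    Tendsto (fun lam_mr : ℝ =>
      (mu0 * (lam_mr + mu) * (lam_mr + mu + mu0)
          + lam_r ^ 3 * p * (1 - p)
          + lam_r ^ 2 * (mu + mu0 + lam_mr * p * (2 - p))
          + lam_r * ((mu + mu0) ^ 2 + lam_mr ^ 2 * p + lam_mr * (mu * (1 + p) + 2 * mu0)))
        / (lam_r * (mu + (lam_r + lam_mr) * p)
            * (mu0 * (lam_mr + mu + mu0) + lam_r * (mu + mu0) * (1 - p))))
      atTop (nhds ((lam_r * p + mu0) / (lam_r * p * mu0))) :=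
  red_aoi_saturation_limit_general lam_r mu0 mu p hlr hmu0 hp
end

section
/- For fixed λ_r > 0, λ_{-r} ≥ 0, μ > 0, and p ∈ [0,1], the red-task average AoI Δ_r(p, μ₀) is nonincreasing in μ₀ on (0, ∞) when λ_{-r} = 0; i.e., with no edge-server interference, increasing the local service rate never increases the average AoI. -/
/-!
Writing `q = 1 - p`, the denominator factors as `λ_r (μ + λ_r p) (μ + μ₀) (μ₀ + λ_r q)`, and the
numerator is `(μ + μ₀) (μ + λ_r) (μ₀ + λ_r) + λ_r³ p q`. Since `μ₀ + λ_r = (μ₀ + λ_r q) + λ_r p`,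
the AoI splits as a constant plus nonnegative multiples of `1 / (μ₀ + λ_r q)` and
`1 / ((μ + μ₀) (μ₀ + λ_r q))`, both of which decrease in `μ₀`.
-/

open Set

theorem MonotoneOn.antitoneOn_const_div {α K : Type*} [Preorder α] [Semifield K] [LinearOrder K]
    [IsStrictOrderedRing K] {s : Set α} {g : α → K} {c : K} (hc : 0 ≤ c) (hg : MonotoneOn g s)
    (hg₀ : ∀ x ∈ s, 0 < g x) : AntitoneOn (fun x => c / g x) s :=
  fun _ ha _ hb hab => div_le_div_of_nonneg_left hc (hg₀ _ ha) (hg ha hb hab)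

theorem red_aoi_eqOn_partial_fractions {lam_r mu p : ℝ} (hlr : 0 < lam_r) (hmu : 0 < mu)
    (hp : p ∈ Icc (0:ℝ) 1) :
    EqOn (fun mu0 : ℝ =>
      (mu0 * mu * (mu + mu0)
          + lam_r ^ 3 * p * (1 - p)
          + lam_r ^ 2 * (mu + mu0)
          + lam_r * (mu + mu0) ^ 2)
        / (lam_r * (mu + lam_r * p)
            * (mu0 * (mu + mu0) + lam_r * (mu + mu0) * (1 - p))))
      (fun mu0 : ℝ =>
        (mu + lam_r) / (lam_r * (mu + lam_r * p))
          + (mu + lam_r) * p / (mu + lam_r * p) / (mu0 + lam_r * (1 - p))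
          + lam_r ^ 2 * p * (1 - p) / (mu + lam_r * p) / ((mu + mu0) * (mu0 + lam_r * (1 - p))))
      (Ioi 0) := by
  intro mu0 (hmu0 : 0 < mu0)
  obtain ⟨hp0, hp1⟩ := hp
  have hq : 0 ≤ 1 - p := by linarith
  have : 0 < mu + lam_r * p := by positivity
  have : 0 < mu0 + lam_r * (1 - p) := by positivity
  have : 0 < mu + mu0 := by positivity
  field_simp
  ring

/-- With no edge-server interference (`λ_{-r} = 0`), the red-task average AoI is
nonincreasing in the local service rate `μ₀` on `(0,∞)`. -/
theorem red_aoi_antitone_in_mu0 (lam_r mu p : ℝ)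
    (hlr : 0 < lam_r) (hmu : 0 < mu) (hp : p ∈ Set.Icc (0:ℝ) 1) :
    AntitoneOn (fun mu0 : ℝ =>
      (mu0 * mu * (mu + mu0)
          + lam_r ^ 3 * p * (1 - p)
          + lam_r ^ 2 * (mu + mu0)
          + lam_r * (mu + mu0) ^ 2)
        / (lam_r * (mu + lam_r * p)
            * (mu0 * (mu + mu0) + lam_r * (mu + mu0) * (1 - p))))
      (Set.Ioi (0:ℝ)) := by
  refine AntitoneOn.congr ?_ (red_aoi_eqOn_partial_fractions hlr hmu hp).symm
  obtain ⟨hp0, hp1⟩ := hp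
  have hq : 0 ≤ 1 - p := by linarith
  have hshift : MonotoneOn (fun mu0 : ℝ => mu0 + lam_r * (1 - p)) (Ioi 0) :=
    monotone_id.monotoneOn _ |>.add_const _
  have hshift_pos : ∀ mu0 ∈ Ioi (0:ℝ), 0 < mu0 + lam_r * (1 - p) := fun mu0 (h : 0 < mu0) => by
    positivity
  have hsum_pos : ∀ mu0 ∈ Ioi (0:ℝ), 0 < mu + mu0 := fun mu0 (h : 0 < mu0) => by positivity
  have hprod : MonotoneOn (fun mu0 : ℝ => (mu + mu0) * (mu0 + lam_r * (1 - p))) (Ioi 0) :=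
    ((monotone_id.const_add mu).monotoneOn _).mul hshift (fun x hx => (hsum_pos x hx).le)
      (fun x hx => (hshift_pos x hx).le)
  exact ((hshift.antitoneOn_const_div (by positivity) hshift_pos).const_add _).add
    (hprod.antitoneOn_const_div (by positivity) fun x hx =>
      mul_pos (hsum_pos x hx) (hshift_pos x hx))
end
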